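/- arXiv:hep-th/0605168 — 9 statements merged into one kernel-verified Lean document; each statement's English description precedes it below -/
import Mathlib

section
/- Every indecomposable generalized Cartan matrix K satisfies exactly one of the following three conditions: (i) K is of finite type, i.e. there exists u : Fin n → ℝ with u i > 0 for all i and (K ·ᵥ u) i > 0 for all i; (ii) K is of affine type, i.e. there exists u : Fin n → ℝ with u i > 0 for all i and K ·ᵥ u = 0; (iii) K is of indefinite type, i.e. there exists u : Fin n → ℝ with u i > 0 for all i and (K ·ᵥ u) i < 0 for all i. -/
/-!
Let `A` be the real matrix of `K`; its off-diagonal entries are `≤ 0`. For large `c` the matrix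
`c • 1 - A` is nonnegative and, by indecomposability, irreducible, so Perron–Frobenius (via the
Collatz–Wielandt maximum) gives `v > 0` with `A *ᵥ v = μ • v`, and the sign of `μ` shows that
`K` has at least one of the three types. Conversely, for `u, w > 0` take `t` maximal with
`u - t • w ≥ 0`: at a coordinate `i` where `u - t • w` vanishes, the sign pattern of `A` forces
`(A *ᵥ u) i ≤ t * (A *ᵥ w) i`, which rules out any two types holding together.
-/

/-- `K` is an `n × n` generalized Cartan matrix. -/
def IsGCM {n : ℕ} (K : Matrix (Fin n) (Fin n) ℤ) : Prop :=
  (∀ i, K i i = 2) ∧ (∀ i j, i ≠ j → K i j ≤ 0) ∧ (∀ i j, i ≠ j → K i j = 0 → K j i = 0)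

/-- `K` is indecomposable: there is no partition of `Fin n` into two nonempty disjoint
subsets `S`, `T` with `K i j = 0` for all `i ∈ S`, `j ∈ T`. -/
def Indecomposable {n : ℕ} (K : Matrix (Fin n) (Fin n) ℤ) : Prop :=
  ¬ ∃ S T : Finset (Fin n), S.Nonempty ∧ T.Nonempty ∧ Disjoint S T ∧ S ∪ T = Finset.univ ∧
      ∀ i ∈ S, ∀ j ∈ T, K i j = 0

/-- `K` with entries viewed in `ℝ`. -/
def KR {n : ℕ} (K : Matrix (Fin n) (Fin n) ℤ) : Matrix (Fin n) (Fin n) ℝ :=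
  K.map (Int.cast : ℤ → ℝ)

/-- Finite type: a positive vector with entrywise positive image. -/
def FiniteType {n : ℕ} (K : Matrix (Fin n) (Fin n) ℤ) : Prop :=
  ∃ u : Fin n → ℝ, (∀ i, 0 < u i) ∧ ∀ i, 0 < (KR K).mulVec u i

/-- Affine type: a positive null vector. -/
def AffineType {n : ℕ} (K : Matrix (Fin n) (Fin n) ℤ) : Prop :=
  ∃ u : Fin n → ℝ, (∀ i, 0 < u i) ∧ (KR K).mulVec u = 0

/-- Indefinite type: a positive vector with entrywise negative image. -/
def IndefiniteType {n : ℕ} (K : Matrix (Fin n) (Fin n) ℤ) : Prop :=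
  ∃ u : Fin n → ℝ, (∀ i, 0 < u i) ∧ ∀ i, (KR K).mulVec u i < 0

open Finset

variable {ι : Type*} [Fintype ι]

noncomputable def posSupport (u : ι → ℝ) : Finset ι := {i | 0 < u i}

theorem mem_posSupport {u : ι → ℝ} {i : ι} : i ∈ posSupport u ↔ 0 < u i := by
  simp [posSupport]

namespace Matrix

/-- The span of the basis vectors indexed by `S` is `B`-invariant iff `B i j = 0` for `i ∉ S`,
`j ∈ S`; for nonnegative `B` this definition is Perron–Frobenius irreducibility. -/
def HasNoInvariantCoordinateSubspace (B : Matrix ι ι ℝ) : Prop :=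
  ∀ S : Finset ι, S.Nonempty → S ≠ univ → ∃ i ∉ S, ∃ j ∈ S, B i j ≠ 0

theorem mulVec_apply_nonneg {B : Matrix ι ι ℝ} (hB : ∀ i j, 0 ≤ B i j) {u : ι → ℝ}
    (hu : ∀ i, 0 ≤ u i) (i : ι) : 0 ≤ (B *ᵥ u) i :=
  sum_nonneg fun j _ => mul_nonneg (hB i j) (hu j)

/-- The Perron root of a nonnegative irreducible `B` is the largest first coordinate here. -/
def collatzWielandtSet (B : Matrix ι ι ℝ) : Set (ℝ × (ι → ℝ)) :=
  {p | 0 ≤ p.1 ∧ p.2 ∈ stdSimplex ℝ ι ∧ p.1 • p.2 ≤ B *ᵥ p.2}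

theorem fst_le_sum_of_mem_collatzWielandtSet {B : Matrix ι ι ℝ} (hB : ∀ i j, 0 ≤ B i j)
    {p : ℝ × (ι → ℝ)} (hp : p ∈ B.collatzWielandtSet) : p.1 ≤ ∑ i, ∑ j, B i j := by
  obtain ⟨-, ⟨hu, hsum⟩, hle⟩ := hp
  have hu1 (j : ι) : p.2 j ≤ 1 := hsum ▸ single_le_sum (fun k _ => hu k) (mem_univ j)
  calc p.1 = ∑ i, p.1 * p.2 i := by rw [← mul_sum, hsum, mul_one]
    _ ≤ ∑ i, (B *ᵥ p.2) i := sum_le_sum fun i _ => hle i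
    _ ≤ ∑ i, ∑ j, B i j :=
      sum_le_sum fun i _ => sum_le_sum fun j _ => mul_le_of_le_one_right (hB i j) (hu1 j)

theorem isCompact_collatzWielandtSet {B : Matrix ι ι ℝ} (hB : ∀ i j, 0 ≤ B i j) :
    IsCompact B.collatzWielandtSet := by
  refine ((isCompact_Icc (a := 0) (b := ∑ i, ∑ j, B i j)).prod
    (isCompact_stdSimplex ℝ ι)).of_isClosed_subset ?_
    fun p hp => ⟨⟨hp.1, fst_le_sum_of_mem_collatzWielandtSet hB hp⟩, hp.2.1⟩
  have hmulVec : Continuous fun p : ℝ × (ι → ℝ) => B *ᵥ p.2 :=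
    continuous_const.matrix_mulVec continuous_snd
  exact (isClosed_le continuous_const continuous_fst).inter
    (((isClosed_stdSimplex ℝ ι).preimage continuous_snd).inter
      (isClosed_le (continuous_fst.smul continuous_snd) hmulVec))

theorem collatzWielandtSet_nonempty [Nonempty ι] {B : Matrix ι ι ℝ}
    (hB : ∀ i j, 0 ≤ B i j) : B.collatzWielandtSet.Nonempty := by
  refine ⟨(0, fun _ => (Fintype.card ι : ℝ)⁻¹), le_rfl, ⟨fun _ => by positivity, ?_⟩,
    fun i => ?_⟩
  · simp
  · rw [zero_smul]
    exact mulVec_apply_nonneg hB (fun _ => by positivity) i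

theorem smul_mem_collatzWielandtSet [Nonempty ι] {B : Matrix ι ι ℝ} {t : ℝ} (ht : 0 ≤ t)
    {z : ι → ℝ} (hz : ∀ i, 0 < z i) (hle : t • z ≤ B *ᵥ z) :
    (t, (∑ i, z i)⁻¹ • z) ∈ B.collatzWielandtSet := by
  have hsum : 0 < ∑ i, z i := sum_pos (fun i _ => hz i) univ_nonempty
  refine ⟨ht, ⟨fun i => ?_, ?_⟩, ?_⟩
  · exact smul_nonneg (inv_nonneg.2 hsum.le) (hz i).le
  · simp only [Pi.smul_apply, smul_eq_mul, ← mul_sum, inv_mul_cancel₀ hsum.ne']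
  · rw [mulVec_smul, smul_comm]
    exact smul_le_smul_of_nonneg_left hle (inv_nonneg.2 hsum.le)

theorem exists_lt_fst_mem_collatzWielandtSet [Nonempty ι] {B : Matrix ι ι ℝ} {r : ℝ}
    (hr : 0 ≤ r) {z : ι → ℝ} (hz : ∀ i, 0 < z i) (hlt : ∀ i, r * z i < (B *ᵥ z) i) :
    ∃ p ∈ B.collatzWielandtSet, r < p.1 := by
  set t := univ.inf' univ_nonempty fun i => (B *ᵥ z) i / z i
  have hrt : r < t := (lt_inf'_iff _).2 fun i _ => (lt_div_iff₀ (hz i)).2 (hlt i)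
  refine ⟨_, smul_mem_collatzWielandtSet (hr.trans hrt.le) hz fun i => ?_, hrt⟩
  exact (le_div_iff₀ (hz i)).1 (inf'_le _ (mem_univ i))

section Perron

variable [DecidableEq ι]

theorem one_add_mulVec_apply (B : Matrix ι ι ℝ) (u : ι → ℝ) (i : ι) :
    ((1 + B) *ᵥ u) i = u i + (B *ᵥ u) i := by
  simp [add_mulVec]

theorem one_add_mulVec_apply_nonneg {B : Matrix ι ι ℝ} (hB : ∀ i j, 0 ≤ B i j)
    {u : ι → ℝ} (hu : ∀ i, 0 ≤ u i) (i : ι) : 0 ≤ ((1 + B) *ᵥ u) i := by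
  rw [one_add_mulVec_apply]
  exact add_nonneg (hu i) (mulVec_apply_nonneg hB hu i)

theorem posSupport_subset_one_add_mulVec {B : Matrix ι ι ℝ} (hB : ∀ i j, 0 ≤ B i j)
    {u : ι → ℝ} (hu : ∀ i, 0 ≤ u i) : posSupport u ⊆ posSupport ((1 + B) *ᵥ u) := by
  intro i hi
  rw [mem_posSupport, one_add_mulVec_apply] at *
  exact add_pos_of_pos_of_nonneg hi (mulVec_apply_nonneg hB hu i)

theorem posSupport_ssubset_one_add_mulVec {B : Matrix ι ι ℝ} (hB : ∀ i j, 0 ≤ B i j)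
    (hirr : B.HasNoInvariantCoordinateSubspace) {u : ι → ℝ} (hu : ∀ i, 0 ≤ u i)
    (hne : (posSupport u).Nonempty) (hne_univ : posSupport u ≠ univ) :
    posSupport u ⊂ posSupport ((1 + B) *ᵥ u) := by
  obtain ⟨i, hi, j, hj, hij⟩ := hirr _ hne hne_univ
  refine (ssubset_iff_of_subset (posSupport_subset_one_add_mulVec hB hu)).2 ⟨i, ?_, hi⟩
  rw [mem_posSupport] at hj ⊢
  have hBu : B i j * u j ≤ (B *ᵥ u) i :=
    single_le_sum (f := fun k => B i k * u k) (fun k _ => mul_nonneg (hB i k) (hu k))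
      (mem_univ j)
  rw [one_add_mulVec_apply]
  nlinarith [(hB i j).lt_of_ne' hij, hu i]

theorem one_add_pow_mulVec_pos {B : Matrix ι ι ℝ} (hB : ∀ i j, 0 ≤ B i j)
    (hirr : B.HasNoInvariantCoordinateSubspace) (k : ℕ) {u : ι → ℝ} (hu : ∀ i, 0 ≤ u i)
    (hne : (posSupport u).Nonempty) (hcard : Fintype.card ι ≤ #(posSupport u) + k) (i : ι) :
    0 < ((1 + B) ^ k *ᵥ u) i := by
  induction k generalizing u with
  | zero =>
    have huniv : posSupport u = univ :=
      eq_univ_of_card _ (by have := card_le_univ (posSupport u); omega)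
    rw [pow_zero, one_mulVec, ← mem_posSupport, huniv]
    exact mem_univ i
  | succ k ih =>
    rw [pow_succ, ← mulVec_mulVec]
    have hsub := posSupport_subset_one_add_mulVec hB hu
    refine ih (one_add_mulVec_apply_nonneg hB hu) (hne.mono hsub) ?_
    by_cases huniv : posSupport u = univ
    · rw [huniv, univ_subset_iff] at hsub
      rw [hsub, card_univ]
      omega
    · have := card_lt_card (posSupport_ssubset_one_add_mulVec hB hirr hu hne huniv)
      omega

theorem one_add_pow_card_sub_one_mulVec_pos {B : Matrix ι ι ℝ} (hB : ∀ i j, 0 ≤ B i j)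
    (hirr : B.HasNoInvariantCoordinateSubspace) {u : ι → ℝ} (hu : ∀ i, 0 ≤ u i)
    (hu0 : u ≠ 0) (i : ι) : 0 < ((1 + B) ^ (Fintype.card ι - 1) *ᵥ u) i := by
  obtain ⟨j, hj⟩ := Function.ne_iff.1 hu0
  have hne : (posSupport u).Nonempty := ⟨j, mem_posSupport.2 ((hu j).lt_of_ne' hj)⟩
  exact one_add_pow_mulVec_pos hB hirr _ hu hne (by have := hne.card_pos; omega) i

theorem pow_mulVec_of_mulVec_eq_smul {A : Matrix ι ι ℝ} {v : ι → ℝ} {c : ℝ}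
    (h : A *ᵥ v = c • v) (k : ℕ) : (A ^ k) *ᵥ v = c ^ k • v := by
  induction k with
  | zero => simp
  | succ k ih => rw [pow_succ, ← mulVec_mulVec, h, mulVec_smul, ih, smul_smul, pow_succ']

theorem exists_pos_eigenvector_of_nonneg [Nonempty ι] {B : Matrix ι ι ℝ}
    (hB : ∀ i j, 0 ≤ B i j) (hirr : B.HasNoInvariantCoordinateSubspace) :
    ∃ r : ℝ, ∃ v : ι → ℝ, (∀ i, 0 < v i) ∧ B *ᵥ v = r • v := by
  obtain ⟨⟨r, u⟩, ⟨hr, ⟨hu, hsum⟩, hru⟩, hmax⟩ :=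
    (isCompact_collatzWielandtSet hB).exists_isMaxOn (collatzWielandtSet_nonempty hB)
      continuous_fst.continuousOn
  have hu0 : u ≠ 0 := by rintro rfl; simp at hsum
  set P := (1 + B) ^ (Fintype.card ι - 1)
  have hPB : P * B = B * P := ((Commute.one_left B).add_left (Commute.refl B)).pow_left _
  -- `P` commutes with `B` and makes `B *ᵥ u - r • u ≥ 0` strictly positive unless it is `0`,
  -- in which case `P *ᵥ u` would have a Collatz–Wielandt value larger than the maximum `r`.
  have heig : B *ᵥ u = r • u := by
    by_contra hne
    have hw : ∀ i, 0 ≤ (B *ᵥ u - r • u) i := fun i => sub_nonneg.2 (hru i)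
    obtain ⟨p, hp, hrp⟩ := exists_lt_fst_mem_collatzWielandtSet hr (z := P *ᵥ u)
      (one_add_pow_card_sub_one_mulVec_pos hB hirr hu hu0) fun i => by
        have := one_add_pow_card_sub_one_mulVec_pos hB hirr hw (sub_ne_zero.2 hne) i
        rwa [mulVec_sub, mulVec_mulVec, hPB, ← mulVec_mulVec, mulVec_smul, Pi.sub_apply,
          sub_pos, Pi.smul_apply, smul_eq_mul] at this
    exact (hmax hp).not_gt hrp
  have hPu : P *ᵥ u = (1 + r) ^ (Fintype.card ι - 1) • u := by
    refine pow_mulVec_of_mulVec_eq_smul ?_ _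
    rw [add_mulVec, one_mulVec, heig, add_smul, one_smul]
  refine ⟨r, u, fun i => ?_, heig⟩
  have := one_add_pow_card_sub_one_mulVec_pos hB hirr hu hu0 i
  rw [hPu, Pi.smul_apply, smul_eq_mul] at this
  exact pos_of_mul_pos_right this (by positivity)

theorem exists_pos_eigenvector_of_offDiag_nonpos [Nonempty ι] {A : Matrix ι ι ℝ}
    (hA : ∀ i j, i ≠ j → A i j ≤ 0)
    (hirr : A.HasNoInvariantCoordinateSubspace) :
    ∃ μ : ℝ, ∃ v : ι → ℝ, (∀ i, 0 < v i) ∧ A *ᵥ v = μ • v := by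
  set c := univ.sup' univ_nonempty fun i => A i i
  have hB : ∀ i j, 0 ≤ (c • 1 - A) i j := by
    intro i j
    rcases eq_or_ne i j with rfl | hij
    · simpa using le_sup' (fun i => A i i) (mem_univ i)
    · simpa [hij] using hA i j hij
  obtain ⟨r, v, hv, hBv⟩ := exists_pos_eigenvector_of_nonneg hB fun S hS hS' => by
    obtain ⟨i, hi, j, hj, hij⟩ := hirr S hS hS'
    exact ⟨i, hi, j, hj, by simpa [show i ≠ j by rintro rfl; exact hi hj] using hij⟩
  refine ⟨c - r, v, hv, ?_⟩
  rw [sub_mulVec, smul_mulVec, one_mulVec, sub_eq_iff_eq_add] at hBv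
  rw [sub_smul, hBv, add_sub_cancel_left]

end Perron

theorem exists_mulVec_le_mul_mulVec_of_offDiag_nonpos [Nonempty ι] {A : Matrix ι ι ℝ}
    (hA : ∀ i j, i ≠ j → A i j ≤ 0) {u w : ι → ℝ} (hu : ∀ i, 0 < u i)
    (hw : ∀ i, 0 < w i) :
    ∃ i, ∃ t > 0, (A *ᵥ u) i ≤ t * (A *ᵥ w) i := by
  obtain ⟨i, -, hi⟩ := exists_min_image univ (fun j => u j / w j) univ_nonempty
  set t := u i / w i
  have hx : ∀ j, 0 ≤ (u - t • w) j := fun j => by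
    simpa [sub_nonneg] using (le_div_iff₀ (hw j)).1 (hi j (mem_univ j))
  have hxi : (u - t • w) i = 0 := by simp [t, div_mul_cancel₀ _ (hw i).ne']
  have hAx : (A *ᵥ (u - t • w)) i ≤ 0 := by
    refine sum_nonpos fun j _ => ?_
    rcases eq_or_ne i j with rfl | hij
    · rw [hxi, mul_zero]
    · exact mul_nonpos_of_nonpos_of_nonneg (hA i j hij) (hx j)
  refine ⟨i, t, div_pos (hu i) (hw i), ?_⟩
  rw [mulVec_sub, mulVec_smul] at hAx
  simpa [sub_nonpos] using hAx

end Matrix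

open Matrix

theorem Indecomposable.hasNoInvariantCoordinateSubspace {n : ℕ} {K : Matrix (Fin n) (Fin n) ℤ}
    (hK : Indecomposable K) : (KR K).HasNoInvariantCoordinateSubspace := by
  intro S hS hS_univ
  by_contra! h
  refine hK ⟨Sᶜ, S, nonempty_iff_ne_empty.2 (by rwa [Ne, compl_eq_empty_iff]), hS,
    disjoint_compl_left, by rw [union_comm, union_compl], fun i hi j hj => ?_⟩
  simpa [KR] using h i (mem_compl.1 hi) j hj

theorem IsGCM.KR_offDiag_nonpos {n : ℕ} {K : Matrix (Fin n) (Fin n) ℤ} (hK : IsGCM K) :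
    ∀ i j, i ≠ j → KR K i j ≤ 0 := fun i j hij => by
  simpa [KR] using hK.2.1 i j hij

theorem IsGCM.finiteType_or_affineType_or_indefiniteType {n : ℕ} [Nonempty (Fin n)]
    {K : Matrix (Fin n) (Fin n) ℤ} (hK : IsGCM K) (hInd : Indecomposable K) :
    FiniteType K ∨ AffineType K ∨ IndefiniteType K := by
  obtain ⟨μ, v, hv, hKv⟩ := exists_pos_eigenvector_of_offDiag_nonpos hK.KR_offDiag_nonpos
    hInd.hasNoInvariantCoordinateSubspace
  rcases lt_trichotomy 0 μ with hμ | rfl | hμ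
  · exact .inl ⟨v, hv, fun i => by simpa [hKv] using mul_pos hμ (hv i)⟩
  · exact .inr (.inl ⟨v, hv, by rw [hKv, zero_smul]⟩)
  · exact .inr (.inr ⟨v, hv, fun i => by simpa [hKv] using mul_neg_of_neg_of_pos hμ (hv i)⟩)

theorem FiniteType.not_affineType {n : ℕ} [Nonempty (Fin n)]
    {K : Matrix (Fin n) (Fin n) ℤ} (hK : IsGCM K) (hF : FiniteType K) : ¬ AffineType K := by
  rintro ⟨w, hw, hKw⟩
  obtain ⟨u, hu, hKu⟩ := hF
  obtain ⟨i, t, -, hle⟩ :=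
    exists_mulVec_le_mul_mulVec_of_offDiag_nonpos hK.KR_offDiag_nonpos hu hw
  simpa [hKw] using (hKu i).trans_le hle

theorem FiniteType.not_indefiniteType {n : ℕ} [Nonempty (Fin n)]
    {K : Matrix (Fin n) (Fin n) ℤ} (hK : IsGCM K) (hF : FiniteType K) : ¬ IndefiniteType K := by
  rintro ⟨w, hw, hKw⟩
  obtain ⟨u, hu, hKu⟩ := hF
  obtain ⟨i, t, ht, hle⟩ :=
    exists_mulVec_le_mul_mulVec_of_offDiag_nonpos hK.KR_offDiag_nonpos hu hw
  linarith [hKu i, mul_neg_of_pos_of_neg ht (hKw i)]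

theorem AffineType.not_indefiniteType {n : ℕ} [Nonempty (Fin n)]
    {K : Matrix (Fin n) (Fin n) ℤ} (hK : IsGCM K) (hA : AffineType K) : ¬ IndefiniteType K := by
  rintro ⟨w, hw, hKw⟩
  obtain ⟨u, hu, hKu⟩ := hA
  obtain ⟨i, t, ht, hle⟩ :=
    exists_mulVec_le_mul_mulVec_of_offDiag_nonpos hK.KR_offDiag_nonpos hu hw
  rw [hKu, Pi.zero_apply] at hle
  linarith [mul_neg_of_pos_of_neg ht (hKw i)]

/-- Vinberg's theorem: every indecomposable generalized Cartan matrix is of exactly one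
of the three types: finite, affine, or indefinite. -/
theorem vinberg_trichotomy {n : ℕ} (hn : 1 ≤ n) (K : Matrix (Fin n) (Fin n) ℤ)
    (hGCM : IsGCM K) (hInd : Indecomposable K) :
    (FiniteType K ∧ ¬ AffineType K ∧ ¬ IndefiniteType K) ∨
    (¬ FiniteType K ∧ AffineType K ∧ ¬ IndefiniteType K) ∨
    (¬ FiniteType K ∧ ¬ AffineType K ∧ IndefiniteType K) := by
  have : Nonempty (Fin n) := ⟨⟨0, hn⟩⟩
  rcases hGCM.finiteType_or_affineType_or_indefiniteType hInd with hF | hA | hI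
  · exact .inl ⟨hF, hF.not_affineType hGCM, hF.not_indefiniteType hGCM⟩
  · exact .inr (.inl ⟨fun hF => hF.not_affineType hGCM hA, hA, hA.not_indefiniteType hGCM⟩)
  · exact .inr (.inr ⟨fun hF => hF.not_indefiniteType hGCM hI,
      fun hA => hA.not_indefiniteType hGCM hI, hI⟩)
end

section
/- If an indecomposable generalized Cartan matrix K is of finite type, i.e. there exists u : Fin n → ℝ with u i > 0 for all i and (K ·ᵥ u) i > 0 for all i, then det K > 0. -/
/-! A Z-matrix `M` with `M u > 0` for some `u > 0` becomes strictly diagonally dominant after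
scaling its columns by `u`, so `det M ≠ 0` by the Levy–Desplanques theorem. Both hypotheses persist
along the segment from `diagonal (M i i)` to `M`, so the determinant never vanishes there and keeps
the sign of `∏ i, M i i > 0`. -/

namespace Matrix

def IsZMatrix {ι R : Type*} [Zero R] [LE R] (M : Matrix ι ι R) : Prop :=
  ∀ i j, i ≠ j → M i j ≤ 0

variable {ι : Type*} [Fintype ι] [DecidableEq ι]

lemma IsZMatrix.mulVec_apply_le_diag {R : Type*} [CommRing R] [PartialOrder R]
    [IsOrderedRing R] {M : Matrix ι ι R} (hM : M.IsZMatrix) {u : ι → R} (hu : 0 ≤ u) (i : ι) :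
    (M *ᵥ u) i ≤ M i i * u i := by
  rw [mulVec, dotProduct, ← Finset.add_sum_erase _ _ (Finset.mem_univ i)]
  refine add_le_of_nonpos_right (Finset.sum_nonpos fun j hj => ?_)
  exact mul_nonpos_of_nonpos_of_nonneg (hM i j (Finset.ne_of_mem_erase hj).symm) (hu j)

variable {M : Matrix ι ι ℝ} {u : ι → ℝ}

lemma IsZMatrix.det_ne_zero_of_mulVec_pos (hM : M.IsZMatrix) (hu : ∀ i, 0 < u i)
    (hMu : ∀ i, 0 < (M *ᵥ u) i) : M.det ≠ 0 := by
  have hdom (k : ι) :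
      ∑ j ∈ Finset.univ.erase k, ‖(M * diagonal u) k j‖ < ‖(M * diagonal u) k k‖ := by
    have hoff : ∀ j ∈ Finset.univ.erase k, ‖(M * diagonal u) k j‖ = -(M k j * u j) := by
      intro j hj
      rw [mul_diagonal, Real.norm_eq_abs, abs_of_nonpos]
      exact mul_nonpos_of_nonpos_of_nonneg (hM k j (Finset.ne_of_mem_erase hj).symm) (hu j).le
    have hsplit := Finset.add_sum_erase Finset.univ (fun j => M k j * u j) (Finset.mem_univ k)
    have hMuk := hMu k
    rw [mulVec, dotProduct, ← hsplit] at hMuk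
    rw [Finset.sum_congr rfl hoff, Finset.sum_neg_distrib, mul_diagonal, Real.norm_eq_abs]
    linarith [le_abs_self (M k k * u k)]
  have hMD := det_ne_zero_of_sum_row_lt_diag hdom
  rw [det_mul] at hMD
  exact left_ne_zero_of_mul hMD

lemma IsZMatrix.diag_pos_of_mulVec_pos (hM : M.IsZMatrix) (hu : ∀ i, 0 < u i)
    (hMu : ∀ i, 0 < (M *ᵥ u) i) (i : ι) : 0 < M i i :=
  pos_of_mul_pos_left ((hMu i).trans_le (hM.mulVec_apply_le_diag (fun j => (hu j).le) i))
    (hu i).le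

theorem IsZMatrix.det_pos_of_mulVec_pos (hM : M.IsZMatrix) (hu : ∀ i, 0 < u i)
    (hMu : ∀ i, 0 < (M *ᵥ u) i) : 0 < M.det := by
  set N : ℝ → Matrix ι ι ℝ := fun t => (1 - t) • diagonal (fun i => M i i) + t • M with hN
  have hNZ : ∀ t ∈ Set.Icc (0 : ℝ) 1, (N t).IsZMatrix := by
    intro t ht i j hij
    simpa [hN, hij] using mul_nonpos_of_nonneg_of_nonpos ht.1 (hM i j hij)
  have hNu : ∀ t ∈ Set.Icc (0 : ℝ) 1, ∀ i, 0 < (N t *ᵥ u) i := by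
    intro t ht i
    have hdiag := mul_pos (hM.diag_pos_of_mulVec_pos hu hMu i) (hu i)
    simp only [hN, add_mulVec, smul_mulVec, mulVec_diagonal, Pi.add_apply, Pi.smul_apply,
      smul_eq_mul]
    rcases ht.2.lt_or_eq with ht1 | rfl
    · exact add_pos_of_pos_of_nonneg (mul_pos (by linarith) hdiag) (mul_nonneg ht.1 (hMu i).le)
    · simpa using hMu i
  have hcont : Continuous fun t => (N t).det := by fun_prop
  have hN0 : 0 < (N 0).det := by
    simpa [hN, det_diagonal] using Finset.prod_pos fun i _ => hM.diag_pos_of_mulVec_pos hu hMu i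
  by_contra! hN1
  obtain ⟨t, ht, hzero⟩ : ∃ t ∈ Set.Icc (0 : ℝ) 1, (N t).det = 0 :=
    intermediate_value_Icc' zero_le_one hcont.continuousOn ⟨by simpa [hN] using hN1, hN0.le⟩
  exact (hNZ t ht).det_ne_zero_of_mulVec_pos hu (hNu t ht) hzero

end Matrix

theorem finiteType_det_pos_general {n : ℕ} (K : Matrix (Fin n) (Fin n) ℤ)
    (hGCM : IsGCM K)
    (hfin : ∃ u : Fin n → ℝ, (∀ i, 0 < u i) ∧ ∀ i, 0 < (KR K).mulVec u i) :
    0 < K.det := by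
  obtain ⟨u, hu, hKu⟩ := hfin
  have hZ : (KR K).IsZMatrix := fun i j hij => by simpa [KR] using hGCM.2.1 i j hij
  have hdet := hZ.det_pos_of_mulVec_pos hu hKu
  rw [KR, ← Int.cast_det] at hdet
  exact_mod_cast hdet

/-- If an indecomposable generalized Cartan matrix is of finite type (there is a positive
vector `u` with `K ·ᵥ u` entrywise positive), then `det K > 0`. -/
theorem finiteType_det_pos {n : ℕ} (hn : 1 ≤ n) (K : Matrix (Fin n) (Fin n) ℤ)
    (hGCM : IsGCM K) (hInd : Indecomposable K)
    (hfin : ∃ u : Fin n → ℝ, (∀ i, 0 < u i) ∧ ∀ i, 0 < (KR K).mulVec u i) :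
    0 < K.det :=
  finiteType_det_pos_general K hGCM hfin
end

section
/- If an indecomposable generalized Cartan matrix K is of affine type, i.e. there exists u : Fin n → ℝ with u i > 0 for all i and K ·ᵥ u = 0, then the kernel of K viewed as a linear map (Fin n → ℝ) → (Fin n → ℝ) is one-dimensional; equivalently, the rank of K over ℝ is n − 1 (K has corank 1). -/
/-- If an indecomposable generalized Cartan matrix is of affine type (there is a positive
null vector), then its kernel over `ℝ` is one-dimensional; equivalently its rank over `ℝ`
is `n - 1` (corank `1`). -/
theorem affineType_corank_one {n : ℕ} (hn : 1 ≤ n) (K : Matrix (Fin n) (Fin n) ℤ)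
    (hGCM : IsGCM K) (hInd : Indecomposable K)
    (haff : ∃ u : Fin n → ℝ, (∀ i, 0 < u i) ∧ (KR K).mulVec u = 0) :
    Module.finrank ℝ (LinearMap.ker (Matrix.toLin' (KR K))) = 1 ∧ (KR K).rank = n - 1 := by
  obtain ⟨u, hu, hKu⟩ := haff
  have hne : Nonempty (Fin n) := ⟨⟨0, hn⟩⟩
  have hker : LinearMap.ker (Matrix.toLin' (KR K)) = Submodule.span ℝ {u} := by
    apply le_antisymm
    · intro v hv
      have hKv : (KR K).mulVec v = 0 := by
        rwa [LinearMap.mem_ker, Matrix.toLin'_apply] at hv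
      obtain ⟨i₀, -, hi₀⟩ := Finset.exists_min_image Finset.univ (fun i => v i / u i)
        ⟨Classical.arbitrary (Fin n), Finset.mem_univ _⟩
      set c := v i₀ / u i₀ with hc
      set w : Fin n → ℝ := v - c • u with hw
      have hwnn : ∀ i, 0 ≤ w i := by
        intro i
        have h1 : c ≤ v i / u i := hi₀ i (Finset.mem_univ i)
        have h2 : c * u i ≤ v i := (le_div_iff₀ (hu i)).mp h1
        simp only [hw, Pi.sub_apply, Pi.smul_apply, smul_eq_mul]
        linarith
      have hwi₀ : w i₀ = 0 := by
        simp only [hw, Pi.sub_apply, Pi.smul_apply, smul_eq_mul, hc]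
        rw [div_mul_cancel₀ _ (hu i₀).ne']
        ring
      have hKw : (KR K).mulVec w = 0 := by
        rw [hw, Matrix.mulVec_sub, Matrix.mulVec_smul, hKv, hKu, smul_zero, sub_zero]
      have key : ∀ j, w j = 0 → ∀ i, w i ≠ 0 → K j i = 0 := by
        intro j hj i hi
        have hsum : ∑ k, ((K j k : ℝ)) * w k = 0 := by
          have := congrFun hKw j
          simpa [Matrix.mulVec, dotProduct, KR] using this
        have hterm : ∀ k ∈ Finset.univ, ((K j k : ℝ)) * w k ≤ 0 := by
          intro k _
          rcases eq_or_ne k j with rfl | hkj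
          · rw [hj, mul_zero]
          · exact mul_nonpos_of_nonpos_of_nonneg
              (by exact_mod_cast hGCM.2.1 j k (Ne.symm hkj)) (hwnn k)
        have hall : ∀ k ∈ Finset.univ, ((K j k : ℝ)) * w k = 0 := by
          intro k hk
          have := (Finset.sum_eq_zero_iff_of_nonpos hterm).mp hsum
          exact this k hk
        have h0 : ((K j i : ℝ)) * w i = 0 := hall i (Finset.mem_univ i)
        have : (K j i : ℝ) = 0 := by
          rcases mul_eq_zero.mp h0 with h | h
          · exact h
          · exact absurd h hi
        exact_mod_cast this
      have hwzero : ∀ i, w i = 0 := by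
        by_contra hcon
        push_neg at hcon
        obtain ⟨i₁, hi₁⟩ := hcon
        set S : Finset (Fin n) := Finset.univ.filter (fun j => w j = 0) with hS
        set T : Finset (Fin n) := Finset.univ.filter (fun j => ¬ w j = 0) with hT
        apply hInd
        refine ⟨S, T, ⟨i₀, by simp [hS, hwi₀]⟩, ⟨i₁, by simp [hT, hi₁]⟩, ?_, ?_, ?_⟩
        · exact Finset.disjoint_filter_filter_not _ _ _
        · exact Finset.filter_union_filter_not_eq _ _
        · intro a ha b hb
          simp only [hS, Finset.mem_filter] at ha
          simp only [hT, Finset.mem_filter] at hb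
          exact key a ha.2 b hb.2
      have hv' : v = c • u := by
        funext i
        have := hwzero i
        simp only [hw, Pi.sub_apply, Pi.smul_apply, smul_eq_mul] at this ⊢
        linarith
      rw [hv']
      exact Submodule.smul_mem _ _ (Submodule.mem_span_singleton_self u)
    · rw [Submodule.span_singleton_le_iff_mem, LinearMap.mem_ker, Matrix.toLin'_apply]
      exact hKu
  have hune : u ≠ 0 := fun h => by
    have := hu (Classical.arbitrary (Fin n))
    rw [h] at this
    exact lt_irrefl _ this
  have h1 : Module.finrank ℝ (LinearMap.ker (Matrix.toLin' (KR K))) = 1 := by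
    rw [hker]
    exact finrank_span_singleton hune
  refine ⟨h1, ?_⟩
  have heq : (KR K).mulVecLin = Matrix.toLin' (KR K) := by
    ext v
    simp [Matrix.toLin'_apply]
  have hrn := LinearMap.finrank_range_add_finrank_ker (KR K).mulVecLin
  rw [heq, h1] at hrn
  have hfr : Module.finrank ℝ (Fin n → ℝ) = n := by simp
  rw [hfr] at hrn
  have : (KR K).rank = Module.finrank ℝ (LinearMap.range (KR K).mulVecLin) := rfl
  rw [heq] at this
  rw [this]
  omega
end

section
/- Let K be an indecomposable generalized Cartan matrix. If u, v : Fin n → ℝ satisfy u i > 0 and v i > 0 for all i, K ·ᵥ u = 0 and K ·ᵥ v = 0, then there exists a real constant c > 0 with v = c • u; i.e. the positive null vector of an affine-type indecomposable generalized Cartan matrix is unique up to a multiplicative factor. -/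
/-- The positive null vector of an affine-type indecomposable generalized Cartan matrix is
unique up to a positive multiplicative factor. -/
theorem affine_null_vector_unique {n : ℕ} (hn : 1 ≤ n) (K : Matrix (Fin n) (Fin n) ℤ)
    (hGCM : IsGCM K) (hInd : Indecomposable K) (u v : Fin n → ℝ)
    (hu : ∀ i, 0 < u i) (hv : ∀ i, 0 < v i)
    (hKu : (KR K).mulVec u = 0) (hKv : (KR K).mulVec v = 0) :
    ∃ c : ℝ, 0 < c ∧ v = c • u := by
  obtain ⟨i₀, -, hmin⟩ := Finset.exists_min_image Finset.univ (fun i => v i / u i)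
    (Finset.univ_nonempty_iff.mpr ⟨⟨0, hn⟩⟩)
  set c := v i₀ / u i₀ with hc
  have hcpos : 0 < c := div_pos (hv i₀) (hu i₀)
  set w : Fin n → ℝ := fun j => v j - c * u j with hw
  have hwnn : ∀ j, 0 ≤ w j := by
    intro j
    have h1 : c ≤ v j / u j := hmin j (Finset.mem_univ j)
    have h2 : c * u j ≤ v j := (le_div_iff₀ (hu j)).mp h1
    simpa [hw] using sub_nonneg.mpr h2
  have hKw : ∀ i, ∑ j, KR K i j * w j = 0 := by
    intro i
    have h1 : ∑ j, KR K i j * v j = 0 := by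
      have := congrFun hKv i
      simpa [Matrix.mulVec, dotProduct] using this
    have h2 : ∑ j, KR K i j * u j = 0 := by
      have := congrFun hKu i
      simpa [Matrix.mulVec, dotProduct] using this
    have : ∑ j, KR K i j * w j = (∑ j, KR K i j * v j) - c * ∑ j, KR K i j * u j := by
      rw [Finset.mul_sum, ← Finset.sum_sub_distrib]
      refine Finset.sum_congr rfl fun j _ => by ring
    rw [this, h1, h2]; ring
  have hclaim : ∀ i, w i = 0 → ∀ j, KR K i j * w j = 0 := by
    intro i hi
    have hterms : ∀ j ∈ Finset.univ, KR K i j * w j ≤ 0 := by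
      intro j _
      rcases eq_or_ne j i with rfl | hji
      · rw [hi]; simp
      · have hK : (K i j : ℝ) ≤ 0 := by
          exact_mod_cast hGCM.2.1 i j (Ne.symm hji)
        have : KR K i j = (K i j : ℝ) := rfl
        rw [this]
        exact mul_nonpos_of_nonpos_of_nonneg hK (hwnn j)
    intro j
    exact (Finset.sum_eq_zero_iff_of_nonpos hterms).mp (hKw i) j (Finset.mem_univ j)
  have hwi₀ : w i₀ = 0 := by
    simp only [hw, hc]
    rw [div_mul_cancel₀ _ (ne_of_gt (hu i₀))]
    ring
  have hwzero : ∀ j, w j = 0 := by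
    by_contra h
    push_neg at h
    obtain ⟨j₀, hj₀⟩ := h
    apply hInd
    refine ⟨Finset.univ.filter (fun i => w i = 0),
      Finset.univ.filter (fun i => ¬ w i = 0),
      ⟨i₀, by simp [hwi₀]⟩, ⟨j₀, by simp [hj₀]⟩,
      Finset.disjoint_filter_filter_not _ _ _,
      Finset.filter_union_filter_not_eq _ _, ?_⟩
    intro i hi j hj
    simp only [Finset.mem_filter] at hi hj
    have := hclaim i hi.2 j
    have hKij : (K i j : ℝ) = 0 := by
      rcases mul_eq_zero.mp this with h' | h'
      · exact h'
      · exact absurd h' hj.2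
    exact_mod_cast hKij
  refine ⟨c, hcpos, ?_⟩
  funext j
  have := hwzero j
  simp only [hw] at this
  have : v j = c * u j := by linarith
  simpa using this
end

section
/- If an indecomposable generalized Cartan matrix K is of affine type, i.e. there exists u : Fin n → ℝ with u i > 0 for all i and K ·ᵥ u = 0, then there exists an integer vector m : Fin n → ℤ with m i > 0 for all i and K ·ᵥ m = 0 (matrix-vector product over ℤ). -/
lemma kernel_multiple {n : ℕ} (hn : 1 ≤ n) (K : Matrix (Fin n) (Fin n) ℤ)
    (hGCM : IsGCM K) (hInd : Indecomposable K)
    (u : Fin n → ℝ) (hu : ∀ i, 0 < u i) (w : Fin n → ℝ)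
    (hKu : (KR K).mulVec u = 0) (hKw : (KR K).mulVec w = 0) :
    ∃ c : ℝ, w = c • u := by
  classical
  obtain ⟨i0, -, hi0⟩ := Finset.exists_min_image Finset.univ (fun i => w i / u i)
    ⟨⟨0, hn⟩, Finset.mem_univ _⟩
  set c := w i0 / u i0 with hc
  refine ⟨c, ?_⟩
  set w' : Fin n → ℝ := w - c • u with hw'
  have hw'0 : ∀ i, 0 ≤ w' i := by
    intro i
    have h1 : c ≤ w i / u i := hi0 i (Finset.mem_univ i)
    have h2 : c * u i ≤ (w i / u i) * u i :=
      mul_le_mul_of_nonneg_right h1 (hu i).le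
    rw [div_mul_cancel₀ _ (hu i).ne'] at h2
    simp only [hw', Pi.sub_apply, Pi.smul_apply, smul_eq_mul]
    linarith
  have hKw' : (KR K).mulVec w' = 0 := by
    rw [hw', Matrix.mulVec_sub, Matrix.mulVec_smul, hKu, hKw]
    simp
  have hi00 : w' i0 = 0 := by
    simp only [hw', Pi.sub_apply, Pi.smul_apply, smul_eq_mul, hc]
    rw [div_mul_cancel₀ _ (hu i0).ne']
    ring
  -- closure property
  have key : ∀ i, w' i = 0 → ∀ j, w' j ≠ 0 → K i j = 0 := by
    intro i hi j hj
    have hrow : ∑ k, KR K i k * w' k = 0 := by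
      have := congrFun hKw' i
      simpa [Matrix.mulVec, dotProduct] using this
    have hnonpos : ∀ k ∈ Finset.univ, KR K i k * w' k ≤ 0 := by
      intro k _
      rcases eq_or_ne k i with rfl | hki
      · simp [hi]
      · have hK : (K i k : ℝ) ≤ 0 := by
          exact_mod_cast hGCM.2.1 i k (Ne.symm hki)
        have : KR K i k = (K i k : ℝ) := rfl
        rw [this]
        exact mul_nonpos_of_nonpos_of_nonneg hK (hw'0 k)
    have hall := (Finset.sum_eq_zero_iff_of_nonpos hnonpos).mp hrow
    have hj0 : KR K i j * w' j = 0 := hall j (Finset.mem_univ j)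
    have : (K i j : ℝ) * w' j = 0 := hj0
    rcases mul_eq_zero.mp this with h | h
    · exact_mod_cast h
    · exact absurd h hj
  set Z : Finset (Fin n) := Finset.univ.filter (fun i => w' i = 0) with hZ
  have hZuniv : Z = Finset.univ := by
    by_contra hne
    have hTne : Zᶜ.Nonempty := by
      rw [Finset.nonempty_iff_ne_empty, ne_eq, Finset.compl_eq_empty_iff]
      exact hne
    exact hInd ⟨Z, Zᶜ, ⟨i0, by simp [hZ, hi00]⟩, hTne, disjoint_compl_right,
      Finset.union_compl _, by
        intro i hi j hj
        simp only [hZ, Finset.mem_filter] at hi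
        have hj' : w' j ≠ 0 := by
          simp only [Finset.mem_compl, hZ, Finset.mem_filter, Finset.mem_univ,
            true_and] at hj
          exact hj
        exact key i hi.2 j hj'⟩
  have : ∀ i, w' i = 0 := by
    intro i
    have : i ∈ Z := hZuniv ▸ Finset.mem_univ i
    simpa [hZ] using this
  funext i
  have := this i
  simp only [hw', Pi.sub_apply, Pi.smul_apply, smul_eq_mul] at this ⊢
  linarith

/-- If an indecomposable generalized Cartan matrix is of affine type (there is a positive
real null vector), then there is a positive integer null vector. -/
theorem affineType_integer_null_vector {n : ℕ} (hn : 1 ≤ n) (K : Matrix (Fin n) (Fin n) ℤ)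
    (hGCM : IsGCM K) (hInd : Indecomposable K)
    (haff : ∃ u : Fin n → ℝ, (∀ i, 0 < u i) ∧ (KR K).mulVec u = 0) :
    ∃ m : Fin n → ℤ, (∀ i, 0 < m i) ∧ K.mulVec m = 0 := by
  classical
  obtain ⟨u, hu, hKu⟩ := haff
  -- det K = 0
  have hune : u ≠ 0 := by
    intro h
    exact absurd (congrFun h ⟨0, hn⟩) (hu ⟨0, hn⟩).ne'
  have hdetR : (KR K).det = 0 :=
    (Matrix.exists_mulVec_eq_zero_iff).mp ⟨u, hune, hKu⟩
  have hdet : K.det = 0 := by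
    have h : ((K.det : ℝ)) = (KR K).det := RingHom.map_det (Int.castRingHom ℝ) K
    rw [hdetR] at h
    exact_mod_cast h
  -- nonzero rational kernel vector
  have hdetQ : (K.map (Int.cast : ℤ → ℚ)).det = 0 := by
    have h : ((K.det : ℚ)) = (K.map (Int.cast : ℤ → ℚ)).det :=
      RingHom.map_det (Int.castRingHom ℚ) K
    rw [hdet] at h
    simpa using h.symm
  obtain ⟨q, hqne, hKq⟩ := (Matrix.exists_mulVec_eq_zero_iff).mpr hdetQ
  -- clear denominators
  set v : Fin n → ℤ := fun i => (q i).num * ∏ j ∈ Finset.univ.erase i, ((q j).den : ℤ)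
    with hv
  set D : ℚ := ∏ j, ((q j).den : ℚ) with hD
  have hcast : ∀ i, ((v i : ℤ) : ℚ) = q i * D := by
    intro i
    have hnum : ((q i).num : ℚ) = q i * (q i).den := by
      rw [eq_comm, ← eq_div_iff (by exact_mod_cast (q i).den_ne_zero : ((q i).den : ℚ) ≠ 0)]
      exact (Rat.num_div_den (q i)).symm
    push_cast [hv]
    rw [hnum, hD, mul_assoc,
      Finset.mul_prod_erase _ (fun j => ((q j).den : ℚ)) (Finset.mem_univ i)]
  have hKv : K.mulVec v = 0 := by
    funext i
    have hQ : ∑ j, (K.map (Int.cast : ℤ → ℚ)) i j * q j = 0 := by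
      have := congrFun hKq i
      simpa [Matrix.mulVec, dotProduct] using this
    have h2 : ((K.mulVec v i : ℤ) : ℚ) = 0 := by
      have h3 : ((K.mulVec v i : ℤ) : ℚ) = (∑ j, (K i j : ℚ) * q j) * D := by
        simp only [Matrix.mulVec, dotProduct]
        push_cast
        rw [Finset.sum_mul]
        exact Finset.sum_congr rfl fun j _ => by rw [hcast j]; ring
      rw [h3]
      have h4 : ∑ j, (K i j : ℚ) * q j = 0 := by
        simpa [Matrix.map] using hQ
      rw [h4, zero_mul]
    exact_mod_cast h2
  obtain ⟨i1, hi1'⟩ := Function.ne_iff.mp hqne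
  have hi1 : q i1 ≠ 0 := by simpa using hi1'
  have hvne : v i1 ≠ 0 := by
    simp only [hv]
    refine mul_ne_zero (Rat.num_ne_zero.mpr hi1) ?_
    exact Finset.prod_ne_zero_iff.mpr fun j _ => by
      exact_mod_cast (q j).den_ne_zero
  -- real cast of v is in kernel
  set w : Fin n → ℝ := fun i => (v i : ℝ) with hw
  have hKw : (KR K).mulVec w = 0 := by
    funext i
    have : ((K.mulVec v i : ℤ) : ℝ) = 0 := by rw [congrFun hKv i]; simp
    simp only [Matrix.mulVec, dotProduct] at this ⊢
    push_cast at this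
    simpa [KR, Matrix.map, hw] using this
  obtain ⟨c, hcw⟩ := kernel_multiple hn K hGCM hInd u hu w hKu hKw
  have hcne : c ≠ 0 := by
    intro h
    rw [h] at hcw
    have h5 : w i1 = 0 := by rw [hcw]; simp
    simp only [hw] at h5
    exact hvne (by exact_mod_cast h5)
  rcases lt_or_gt_of_ne hcne with hcneg | hcpos
  · refine ⟨-v, fun i => ?_, by rw [Matrix.mulVec_neg, hKv, neg_zero]⟩
    have h6 : w i = c * u i := by rw [hcw]; simp
    simp only [hw] at h6
    have hwi : (v i : ℝ) < 0 := by
      rw [h6]; exact mul_neg_of_neg_of_pos hcneg (hu i)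
    have h7 : v i < 0 := by exact_mod_cast hwi
    simp only [Pi.neg_apply]
    omega
  · refine ⟨v, fun i => ?_, hKv⟩
    have h6 : w i = c * u i := by rw [hcw]; simp
    simp only [hw] at h6
    have hwi : (0:ℝ) < (v i : ℝ) := by
      rw [h6]; exact mul_pos hcpos (hu i)
    exact_mod_cast hwi
end

section
/- For every finitely supported function u : ℤ → ℝ with u ≠ 0, the Cartan quadratic form is strictly positive: ∑_{i ∈ ℤ} u i · (2 · u i − u (i+1) − u (i−1)) > 0. -/
open Function Set

private lemma supp_fin (u : ℤ →₀ ℝ) (F : ℝ → ℝ → ℝ) (hF : F 0 0 = 0) (k : ℤ) :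
    (support fun i : ℤ => F (u i) (u (i + k))).Finite := by
  apply Set.Finite.subset ((u.support.finite_toSet).union
    ((u.support.finite_toSet).image (· - k)))
  intro i hi
  simp only [mem_support] at hi
  by_cases h1 : u i = 0
  · right
    refine ⟨i + k, ?_, by ring⟩
    simp only [Finset.mem_coe, Finsupp.mem_support_iff]
    intro h2
    exact hi (by rw [h1, h2, hF])
  · left; simpa [Finsupp.mem_support_iff] using h1

private lemma shift_sum (g : ℤ → ℝ) : (∑ᶠ i : ℤ, g (i + 1)) = ∑ᶠ i : ℤ, g i :=
  finsum_comp_equiv (Equiv.addRight (1 : ℤ))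

/-- The quadratic form of the bi-infinite discrete Cartan operator
`(A u) i = 2 u i - u (i+1) - u (i-1)` is strictly positive on nonzero finitely
supported functions. -/
theorem cartan_form_pos (u : ℤ →₀ ℝ) (hu : u ≠ 0) :
    0 < ∑ᶠ i : ℤ, u i * (2 * u i - u (i + 1) - u (i - 1)) := by
  set d : ℤ → ℝ := fun i => (u i - u (i + 1)) ^ 2 with hd
  set g : ℤ → ℝ := fun i => u i ^ 2 - u i * u (i - 1) with hg
  have hdfin : (support d).Finite := supp_fin u (fun a b => (a - b) ^ 2) (by norm_num) 1
  have hgfin : (support g).Finite := supp_fin u (fun a b => a ^ 2 - a * b) (by norm_num) (-1)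
  have hg1fin : (support fun i : ℤ => g (i + 1)).Finite := by
    have := supp_fin u (fun a b => b ^ 2 - b * a) (by norm_num) 1
    convert this using 2 with i
    simp [hg, add_sub_cancel_right]
  -- rewrite the sum as a sum of squares
  have key : (∑ᶠ i : ℤ, u i * (2 * u i - u (i + 1) - u (i - 1)))
      = ∑ᶠ i : ℤ, d i := by
    have h1 : ∀ i : ℤ, u i * (2 * u i - u (i + 1) - u (i - 1))
        = d i + (g i - g (i + 1)) := by
      intro i
      simp only [hd, hg, add_sub_cancel_right]
      ring
    rw [finsum_congr h1, finsum_add_distrib hdfin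
      (Set.Finite.subset (hgfin.union hg1fin) ?_),
      finsum_sub_distrib hgfin hg1fin, shift_sum g, sub_self, add_zero]
    intro i hi
    simp only [mem_support] at hi
    by_contra h
    simp only [mem_union, mem_support, not_or, not_not] at h
    exact hi (by rw [h.1, h.2, sub_zero])
  rw [key]
  -- find a nonzero difference
  have hne : ∃ j, d j ≠ 0 := by
    by_contra h
    push_neg at h
    have hconst : ∀ j : ℤ, u j = u (j + 1) := by
      intro j
      have := h j
      have h2 : u j - u (j + 1) = 0 := by
        have := pow_eq_zero_iff (n := 2) (by norm_num) |>.mp this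
        exact this
      linarith
    obtain ⟨i, hi⟩ : ∃ i, u i ≠ 0 := by
      by_contra h'
      push_neg at h'
      exact hu (Finsupp.ext h')
    have hstep : ∀ n : ℕ, u (i + n) = u i := by
      intro n
      induction n with
      | zero => simp
      | succ k ih =>
        have : i + ((k : ℤ) + 1) = (i + k) + 1 := by ring
        rw [Nat.cast_add, Nat.cast_one, this, ← hconst (i + k), ih]
    have : (↑u.support : Set ℤ).Infinite := by
      apply Set.infinite_of_injective_forall_mem
        (f := fun n : ℕ => i + (n : ℤ))
        (fun a b hab => by simpa using hab)
        (fun n => by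
          simp only [Finset.mem_coe, Finsupp.mem_support_iff]
          rw [hstep n]; exact hi)
    exact this u.support.finite_toSet
  obtain ⟨j, hj⟩ := hne
  exact finsum_pos' (fun i => sq_nonneg _) ⟨j, lt_of_le_of_ne (sq_nonneg _) (Ne.symm hj)⟩ hdfin
end

section
/- Let f : ℝ → ℝ be continuously differentiable with compact support. Then the discrete kinetic energy converges to the continuum kinetic energy: the function a ↦ (1/a) · ∑'_{i : ℤ} (f ((i+1) · a) − f (i · a))² tends to ∫_ℝ (deriv f x)² dx as a → 0 along a > 0. -/
/-!
On the lattice `aℤ` the discrete energy is `∫ D_a f(⌊x/a⌋)² dx`, where `D_a f(i)` is the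
difference quotient of `f` over the cell `[ia, (i+1)a)` containing `x`. Both endpoints of that
cell tend to `x` as `a → 0⁺`, so strict differentiability of the `C¹` function `f` makes the
integrand converge pointwise to `f'(x)²`. Since `f` is `K`-Lipschitz, the integrand is at most
`K²`, and it vanishes farther than `a` from the support of `f`; dominated convergence finishes.
-/

open Filter Topology MeasureTheory Set Metric Function

theorem HasStrictDerivAt.tendsto_slope {𝕜 F α : Type*} [NontriviallyNormedField 𝕜]
    [NormedAddCommGroup F] [NormedSpace 𝕜 F] {f : 𝕜 → F} {f' : F} {x : 𝕜}
    (hf : HasStrictDerivAt f f' x) {l : Filter α} {u v : α → 𝕜}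
    (hu : Tendsto u l (𝓝 x)) (hv : Tendsto v l (𝓝 x)) (huv : ∀ᶠ t in l, u t ≠ v t) :
    Tendsto (fun t => slope f (u t) (v t)) l (𝓝 f') := by
  have hlo := (hasStrictDerivAt_iff_hasStrictFDerivAt.mp hf).isLittleO.comp_tendsto
    (hv.prodMk_nhds hu)
  rw [← tendsto_sub_nhds_zero_iff]
  refine hlo.tendsto_inv_smul_nhds_zero.congr' ?_
  filter_upwards [huv] with t ht
  have hvu : v t - u t ≠ 0 := sub_ne_zero.mpr ht.symm
  simp [slope_def_module, smul_sub, inv_smul_smul₀ hvu]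

theorem LipschitzWith.norm_slope_le {𝕜 F : Type*} [NontriviallyNormedField 𝕜]
    [NormedAddCommGroup F] [NormedSpace 𝕜 F] {f : 𝕜 → F} {K : NNReal}
    (hf : LipschitzWith K f) (u v : 𝕜) : ‖slope f u v‖ ≤ K := by
  rcases eq_or_ne u v with rfl | huv
  · simp
  have hvu : 0 < ‖v - u‖ := norm_pos_iff.mpr (sub_ne_zero.mpr huv.symm)
  rw [slope_def_module, norm_smul, norm_inv, inv_mul_le_iff₀ hvu]
  simpa only [mul_comm] using hf.norm_sub_le v u

theorem integrable_indicator_cthickening_const {X : Type*} [PseudoMetricSpace X] [ProperSpace X]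
    [MeasurableSpace X] [OpensMeasurableSpace X] {μ : Measure X} [IsFiniteMeasureOnCompacts μ]
    {s : Set X} (hs : Bornology.IsBounded s) (δ c : ℝ) :
    Integrable ((cthickening δ s).indicator fun _ => c) μ :=
  (integrable_indicator_iff isClosed_cthickening.measurableSet).2
    (integrableOn_const hs.cthickening.measure_lt_top.ne)

section FloorIntegral

variable {E : Type*} [NormedAddCommGroup E] [NormedSpace ℝ E] [CompleteSpace E] {φ : ℤ → E}

theorem integral_comp_floor (hφ : Integrable fun y : ℝ => φ ⌊y⌋) :
    ∫ y : ℝ, φ ⌊y⌋ = ∑' i, φ i := by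
  have hunion : (⋃ i : ℤ, (Int.floor : ℝ → ℤ) ⁻¹' {i}) = univ := by
    rw [← preimage_iUnion, iUnion_of_singleton, preimage_univ]
  have hpiece (i : ℤ) : ∫ y in (Int.floor : ℝ → ℤ) ⁻¹' {i}, φ ⌊y⌋ = φ i := by
    rw [setIntegral_congr_fun (Int.measurable_floor (measurableSet_singleton i))
      (fun y (hy : ⌊y⌋ = i) => by rw [hy]), setIntegral_const, Int.preimage_floor_singleton,
      measureReal_def, Real.volume_Ico]
    simp
  rw [← setIntegral_univ, ← hunion, integral_iUnion
    (fun i => Int.measurable_floor (measurableSet_singleton i))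
    (fun i j hij => (disjoint_singleton.mpr hij).preimage _) (hunion ▸ hφ.integrableOn)]
  exact tsum_congr hpiece

theorem integral_comp_floor_div {a : ℝ} (ha : a ≠ 0) (hφ : Integrable fun x : ℝ => φ ⌊x / a⌋) :
    ∫ x : ℝ, φ ⌊x / a⌋ = |a| • ∑' i, φ i := by
  rw [Measure.integral_comp_div (fun y => φ ⌊y⌋),
    integral_comp_floor ((integrable_comp_div_iff (fun y => φ ⌊y⌋) ha).1 hφ)]

end FloorIntegral

theorem tendsto_floor_div_mul (x : ℝ) : Tendsto (fun a : ℝ => ⌊x / a⌋ * a) (𝓝[>] 0) (𝓝 x) := by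
  have hrem : Tendsto (fun a : ℝ => x - ⌊x / a⌋ * a) (𝓝[>] 0) (𝓝 0) :=
    tendsto_of_tendsto_of_tendsto_of_le_of_le' tendsto_const_nhds nhdsWithin_le_nhds
      (eventually_mem_nhdsWithin.mono fun a ha => Int.sub_floor_div_mul_nonneg x ha)
      (eventually_mem_nhdsWithin.mono fun a ha => (Int.sub_floor_div_mul_lt x ha).le)
  simpa using (tendsto_const_nhds (x := x)).sub hrem

section DiscreteDeriv

variable {E : Type*} [NormedAddCommGroup E] [NormedSpace ℝ E] {f : ℝ → E}

noncomputable def discreteDeriv (f : ℝ → E) (a : ℝ) (i : ℤ) : E := slope f (i * a) ((i + 1) * a)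

theorem HasStrictDerivAt.tendsto_discreteDeriv_floor_div {f' : E} {x : ℝ}
    (hf : HasStrictDerivAt f f' x) :
    Tendsto (fun a => discreteDeriv f a ⌊x / a⌋) (𝓝[>] 0) (𝓝 f') := by
  have hnext : Tendsto (fun a : ℝ => (⌊x / a⌋ + 1) * a) (𝓝[>] 0) (𝓝 x) := by
    simpa [add_mul] using (tendsto_floor_div_mul x).add (nhdsWithin_le_nhds (a := (0 : ℝ)))
  refine hf.tendsto_slope (tendsto_floor_div_mul x) hnext ?_
  filter_upwards [eventually_mem_nhdsWithin] with a ha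
  simpa [add_mul] using (ne_of_gt ha)

theorem discreteDeriv_floor_div_eq_zero {a δ x : ℝ} (ha : 0 < a) (haδ : a ≤ δ)
    (hx : x ∉ cthickening δ (support f)) : discreteDeriv f a ⌊x / a⌋ = 0 := by
  have hzero (y : ℝ) (hy : dist x y ≤ δ) : f y = 0 :=
    notMem_support.mp fun hys => hx (mem_cthickening_of_dist_le x y δ _ hys hy)
  have hlo : f (⌊x / a⌋ * a) = 0 := hzero _ <| by
    rw [Real.dist_eq, abs_of_nonneg (Int.sub_floor_div_mul_nonneg x ha)]
    exact (Int.sub_floor_div_mul_lt x ha).le.trans haδ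
  have hhi : f ((⌊x / a⌋ + 1) * a) = 0 := hzero _ <| by
    rw [Real.dist_eq, abs_sub_comm, abs_of_nonneg (by linarith [Int.sub_floor_div_mul_lt x ha])]
    linarith [Int.sub_floor_div_mul_nonneg x ha]
  simp [discreteDeriv, slope_def_module, hlo, hhi]

end DiscreteDeriv

theorem discreteDeriv_eq_div (f : ℝ → ℝ) (a : ℝ) (i : ℤ) :
    discreteDeriv f a i = (f ((i + 1) * a) - f (i * a)) / a := by
  rw [discreteDeriv, slope_def_field]
  ring_nf

theorem mul_tsum_sq_discreteDeriv (f : ℝ → ℝ) (a : ℝ) :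
    a * ∑' i, discreteDeriv f a i ^ 2 = 1 / a * ∑' i : ℤ, (f ((i + 1) * a) - f (i * a)) ^ 2 := by
  simp_rw [discreteDeriv_eq_div, div_pow, div_eq_inv_mul _ (a ^ 2), tsum_mul_left]
  rcases eq_or_ne a 0 with rfl | ha
  · simp
  · field_simp

theorem sq_discreteDeriv_floor_div_le_indicator {f : ℝ → ℝ} {K : NNReal}
    (hf : LipschitzWith K f) {a δ : ℝ} (ha : 0 < a) (haδ : a ≤ δ) (x : ℝ) :
    discreteDeriv f a ⌊x / a⌋ ^ 2 ≤
      (cthickening δ (support f)).indicator (fun _ => (K : ℝ) ^ 2) x := by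
  by_cases hx : x ∈ cthickening δ (support f)
  · rw [indicator_of_mem hx, ← sq_abs]
    exact pow_le_pow_left₀ (abs_nonneg _) (hf.norm_slope_le _ _) 2
  · rw [indicator_of_notMem hx, discreteDeriv_floor_div_eq_zero ha haδ hx, sq, mul_zero]

/-- For a continuously differentiable, compactly supported `f : ℝ → ℝ`, the discrete
kinetic energy `(1/a) ∑_{i : ℤ} (f ((i+1) a) - f (i a))²` converges, as the lattice
spacing `a → 0⁺`, to the continuum kinetic energy `∫ (f' x)² dx`. -/
theorem discrete_kinetic_tendsto_integral (f : ℝ → ℝ)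
    (hf : ContDiff ℝ 1 f) (hsupp : HasCompactSupport f) :
    Tendsto (fun a : ℝ => (1 / a) * ∑' i : ℤ, (f ((i + 1) * a) - f (i * a)) ^ 2)
      (𝓝[>] (0 : ℝ)) (𝓝 (∫ x : ℝ, (deriv f x) ^ 2)) := by
  obtain ⟨K, hK⟩ := hf.lipschitzWith_of_hasCompactSupport hsupp one_ne_zero
  set B := (cthickening 1 (support f)).indicator fun _ => (K : ℝ) ^ 2
  have hB : Integrable B := integrable_indicator_cthickening_const
    (hsupp.isCompact.isBounded.subset (subset_tsupport f)) _ _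
  have hmeas (a : ℝ) : AEStronglyMeasurable fun x => discreteDeriv f a ⌊x / a⌋ ^ 2 :=
    ((measurable_from_top (f := fun i : ℤ => discreteDeriv f a i ^ 2)).comp
      (measurable_id.div_const a).floor).aestronglyMeasurable
  have hdom : ∀ a ∈ Ioc (0 : ℝ) 1, ∀ x, ‖discreteDeriv f a ⌊x / a⌋ ^ 2‖ ≤ B x :=
    fun a ha x => by
      rw [Real.norm_of_nonneg (sq_nonneg _)]
      exact sq_discreteDeriv_floor_div_le_indicator hK ha.1 ha.2 x
  have hlim : Tendsto (fun a => ∫ x, discreteDeriv f a ⌊x / a⌋ ^ 2) (𝓝[>] 0)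
      (𝓝 (∫ x, deriv f x ^ 2)) :=
    tendsto_integral_filter_of_dominated_convergence B (Eventually.of_forall hmeas)
      (eventually_of_mem (Ioc_mem_nhdsGT zero_lt_one) fun a ha =>
        Eventually.of_forall (hdom a ha)) hB
      (Eventually.of_forall fun x =>
        ((hf.hasStrictDerivAt one_ne_zero).tendsto_discreteDeriv_floor_div).pow 2)
  refine hlim.congr' ?_
  filter_upwards [Ioc_mem_nhdsGT zero_lt_one] with a ha
  rw [integral_comp_floor_div (φ := fun i => discreteDeriv f a i ^ 2) ha.1.ne'
    (hB.mono' (hmeas a) (ae_of_all _ (hdom a ha))), abs_of_pos ha.1, smul_eq_mul,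
    mul_tsum_sq_discreteDeriv]
end

section
/- For every n ≥ 1, the vector u : Fin n → ℝ defined by u i = (i + 1) · (n − i) (with i regarded as a natural number, 0-indexed) satisfies u i > 0 for all i and (A ·ᵥ u) i = 2 for all i; in particular u is a positive vector with A ·ᵥ u entrywise positive, witnessing that the su(n+1) Cartan matrix is of finite type in the sense of Vinberg's theorem. -/
/-- The `su(n+1)` Cartan matrix (over `ℝ`): `2` on the diagonal, `-1` on the two
off-diagonals, `0` elsewhere. -/
def suCartan (n : ℕ) : Matrix (Fin n) (Fin n) ℝ :=
  fun i j =>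
    if i = j then 2
    else if (i : ℕ) + 1 = (j : ℕ) ∨ (j : ℕ) + 1 = (i : ℕ) then -1
    else 0

/-- The positive vector `u i = (i+1)(n-i)` satisfies `(A ·ᵥ u) i = 2` for all `i`,
witnessing that the `su(n+1)` Cartan matrix `A` is of finite type in the sense of
Vinberg's theorem. -/
theorem suCartan_finite_type_witness (n : ℕ) (hn : 1 ≤ n) :
    (∀ i : Fin n, 0 < (((i : ℕ) + 1 : ℝ) * ((n : ℝ) - (i : ℕ)))) ∧
    (∀ i : Fin n,
      (suCartan n).mulVec (fun j : Fin n => (((j : ℕ) + 1 : ℝ) * ((n : ℝ) - (j : ℕ)))) i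
        = 2) := by
  constructor
  · intro i
    have h1 : (0:ℝ) < (i : ℕ) + 1 := by positivity
    have h2 : (0:ℝ) < (n:ℝ) - (i : ℕ) := by
      have hi : ((i : ℕ) : ℝ) < (n : ℝ) := by exact_mod_cast i.isLt
      linarith
    exact mul_pos h1 h2
  · intro i
    set u : Fin n → ℝ := fun j => (((j : ℕ) + 1 : ℝ) * ((n : ℝ) - (j : ℕ))) with hu
    have key : ∀ j : Fin n, suCartan n i j * u j =
        (if i = j then 2 * u j else 0) +
        ((if (i : ℕ) + 1 = (j : ℕ) then -u j else 0) +
         (if (j : ℕ) + 1 = (i : ℕ) then -u j else 0)) := by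
      intro j
      simp only [suCartan]
      by_cases h1 : i = j
      · have h2 : ¬ ((i:ℕ) + 1 = (j:ℕ)) := by omega
        have h3 : ¬ ((j:ℕ) + 1 = (i:ℕ)) := by
          subst h1; omega
        simp [h1, h2, h3]
      · rw [if_neg h1]
        by_cases h2 : (i:ℕ) + 1 = (j:ℕ)
        · have h3 : ¬ ((j:ℕ) + 1 = (i:ℕ)) := by omega
          simp [h1, h2, h3]
        · by_cases h3 : (j:ℕ) + 1 = (i:ℕ)
          · simp [h1, h2, h3]
          · simp [h1, h2, h3]
    have hmv : (suCartan n).mulVec u i = ∑ j : Fin n, suCartan n i j * u j := rfl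
    rw [hmv]
    simp only [key]
    rw [Finset.sum_add_distrib, Finset.sum_add_distrib]
    have S1 : (∑ j : Fin n, if i = j then 2 * u j else 0) = 2 * u i := by
      rw [Finset.sum_ite_eq]; simp
    have S2 : (∑ j : Fin n, if (i : ℕ) + 1 = (j : ℕ) then -u j else 0) =
        if h : (i : ℕ) + 1 < n then -u ⟨(i : ℕ) + 1, h⟩ else 0 := by
      split
      · next h =>
        have : ∀ j : Fin n, ((i : ℕ) + 1 = (j : ℕ)) ↔ ((⟨(i:ℕ)+1, h⟩ : Fin n) = j) := by
          intro j; simp only [Fin.ext_iff, Fin.val_mk]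
        simp_rw [this]
        rw [Finset.sum_ite_eq]; simp
      · next h =>
        apply Finset.sum_eq_zero
        intro j _
        have := j.isLt
        rw [if_neg (by omega)]
    have S3 : (∑ j : Fin n, if (j : ℕ) + 1 = (i : ℕ) then -u j else 0) =
        if h : 1 ≤ (i : ℕ) then -u ⟨(i : ℕ) - 1, by omega⟩ else 0 := by
      split
      · next h =>
        have : ∀ j : Fin n, ((j : ℕ) + 1 = (i : ℕ)) ↔ ((⟨(i:ℕ)-1, by omega⟩ : Fin n) = j) := by
          intro j; simp only [Fin.ext_iff]; omega
        simp_rw [this]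
        rw [Finset.sum_ite_eq]; simp
      · next h =>
        apply Finset.sum_eq_zero
        intro j _
        rw [if_neg (by omega)]
    rw [S1, S2, S3]
    have hin : (i : ℕ) < n := i.isLt
    by_cases h2 : (i : ℕ) + 1 < n <;> by_cases h3 : 1 ≤ (i : ℕ)
    · rw [dif_pos h2, dif_pos h3]
      simp only [hu]
      have hc : (((i:ℕ) - 1 : ℕ) : ℝ) = ((i:ℕ) : ℝ) - 1 := by
        push_cast [Nat.cast_sub h3]; ring
      simp only [hc]
      push_cast
      ring
    · rw [dif_pos h2, dif_neg h3]
      have hi0 : (i : ℕ) = 0 := by omega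
      simp only [hu, hi0]
      push_cast
      ring
    · rw [dif_neg h2, dif_pos h3]
      have hN : (n : ℝ) = ((i:ℕ) : ℝ) + 1 := by
        have : n = (i:ℕ) + 1 := by omega
        exact_mod_cast congrArg (Nat.cast : ℕ → ℝ) this
      simp only [hu]
      have hc : (((i:ℕ) - 1 : ℕ) : ℝ) = ((i:ℕ) : ℝ) - 1 := by
        push_cast [Nat.cast_sub h3]; ring
      simp only [hc]
      rw [hN]
      ring
    · rw [dif_neg h2, dif_neg h3]
      have hi0 : (i : ℕ) = 0 := by omega
      have hn1 : n = 1 := by omega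
      simp only [hu, hi0, hn1]
      norm_num
end

section
/- For all integers p, q, r ≥ 2, the determinant of the Cartan matrix K of the star-shaped Dynkin diagram T_{p,q,r} equals p·q + q·r + r·p − p·q·r, i.e. det K = p·q·r·(1/p + 1/q + 1/r − 1). -/
abbrev TVertex (p q r : ℕ) : Type := Unit ⊕ Fin (p - 1) ⊕ Fin (q - 1) ⊕ Fin (r - 1)

def TAdj {p q r : ℕ} : TVertex p q r → TVertex p q r → Bool
  | Sum.inl _, Sum.inr (Sum.inl k) => k.val == 0
  | Sum.inl _, Sum.inr (Sum.inr (Sum.inl k)) => k.val == 0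
  | Sum.inl _, Sum.inr (Sum.inr (Sum.inr k)) => k.val == 0
  | Sum.inr (Sum.inl k), Sum.inl _ => k.val == 0
  | Sum.inr (Sum.inr (Sum.inl k)), Sum.inl _ => k.val == 0
  | Sum.inr (Sum.inr (Sum.inr k)), Sum.inl _ => k.val == 0
  | Sum.inr (Sum.inl k), Sum.inr (Sum.inl l) => (k.val + 1 == l.val) || (l.val + 1 == k.val)
  | Sum.inr (Sum.inr (Sum.inl k)), Sum.inr (Sum.inr (Sum.inl l)) =>
      (k.val + 1 == l.val) || (l.val + 1 == k.val)
  | Sum.inr (Sum.inr (Sum.inr k)), Sum.inr (Sum.inr (Sum.inr l)) =>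
      (k.val + 1 == l.val) || (l.val + 1 == k.val)
  | _, _ => false

def TCartan (p q r : ℕ) : Matrix (TVertex p q r) (TVertex p q r) ℤ :=
  fun v w => if v = w then 2 else if TAdj v w then -1 else 0

/-!
Split off the central vertex: `TCartan p q r = [[2, -wᵀ], [-w, D]]`, where `D` is block
diagonal with the Cartan matrices `A_{p-1}, A_{q-1}, A_{r-1}` of the three chains and `w` marks
their first vertices. Eliminating the centre against the chains (a Schur complement that only
needs a solution `x` of `D x = w`, not an inverse of `D`) gives `det = (2 - w ⬝ x) det D`. On a
chain of length `n` the solution is affine in the index, `x_k = (n - k)/(n + 1)`, so a chain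
contributes `n/(n + 1)` to `w ⬝ x`; the same elimination applied to a chain's first vertex gives
`det A_n = n + 1` by induction. Hence `det = pqr (2 - (p-1)/p - (q-1)/q - (r-1)/r)`.
-/

open Matrix

namespace Matrix

variable {m n R : Type*} [Fintype m] [Fintype n] [DecidableEq m] [DecidableEq n] [CommRing R]

theorem det_fromBlocks_of_mul_eq (A : Matrix m m R) (B : Matrix m n R) (C : Matrix n m R)
    (D : Matrix n n R) (X : Matrix n m R) (hX : D * X = C) :
    (fromBlocks A B C D).det = (A - B * X).det * D.det := by
  have h : fromBlocks A B C D * fromBlocks 1 0 (-X) 1 = fromBlocks (A - B * X) B 0 D := by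
    simp [fromBlocks_multiply, hX, sub_eq_add_neg]
  calc (fromBlocks A B C D).det = (fromBlocks A B C D * fromBlocks 1 0 (-X) 1).det := by
        rw [det_mul, det_fromBlocks_zero₁₂, det_one, det_one, mul_one, mul_one]
    _ = (A - B * X).det * D.det := by rw [h, det_fromBlocks_zero₂₁]

theorem det_fromBlocks_of_mulVec_eq (a : R) (u v x : n → R) (D : Matrix n n R)
    (hx : D *ᵥ x = u) :
    (fromBlocks (of fun _ _ => a) (replicateRow Unit v) (replicateCol Unit u) D).det =
      (a - v ⬝ᵥ x) * D.det := by
  rw [det_fromBlocks_of_mul_eq _ _ _ D (replicateCol Unit x), det_unique]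
  · rfl
  · ext i j
    simp [← hx, mulVec, dotProduct, mul_apply]

end Matrix

variable (K : Type*)

section CommRing

variable [CommRing K]

def pathCartan (n : ℕ) : Matrix (Fin n) (Fin n) K :=
  of fun i j => if i = j then 2 else if (i : ℕ) + 1 = j ∨ (j : ℕ) + 1 = i then -1 else 0

def chainHead (n : ℕ) : Fin n → K := fun k => if (k : ℕ) = 0 then 1 else 0

theorem chainHead_dotProduct (n : ℕ) (f : ℕ → K) :
    chainHead K n ⬝ᵥ (fun k => f k) = if 0 < n then f 0 else 0 := by
  simp only [dotProduct, chainHead, ite_mul, one_mul, zero_mul]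
  rw [Fin.sum_univ_eq_sum_range (fun k => if k = 0 then f k else 0), Finset.sum_ite_eq']
  simp

theorem pathCartan_mulVec (n : ℕ) (f : ℕ → K) (k : Fin n) :
    (pathCartan K n *ᵥ fun j => f j) k =
      2 * f k - (if (k : ℕ) + 1 < n then f (k + 1) else 0) -
        (if 0 < (k : ℕ) then f (k - 1) else 0) := by
  have hsplit : ∀ j : Fin n, pathCartan K n k j * f j =
      (if (j : ℕ) = k then 2 * f j else 0) - (if (j : ℕ) = k + 1 then f j else 0) -
        (if (j : ℕ) + 1 = k then f j else 0) := by
    intro j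
    simp only [pathCartan, of_apply, Fin.ext_iff]
    split_ifs <;> first | omega | ring
  simp only [mulVec, dotProduct, hsplit, Finset.sum_sub_distrib]
  rw [Fin.sum_univ_eq_sum_range (fun j => if j = k then 2 * f j else 0),
    Fin.sum_univ_eq_sum_range (fun j => if j = k + 1 then f j else 0),
    Fin.sum_univ_eq_sum_range (fun j => if j + 1 = k then f j else 0)]
  simp only [Finset.sum_ite_eq', Finset.mem_range, k.isLt, if_true]
  congr 1
  obtain ⟨_ | m, hk⟩ := k
  · simp
  · simp [Finset.sum_ite_eq', show m < n by omega]

theorem pathCartan_succ_submatrix (n : ℕ) :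
    (pathCartan K (n + 1)).submatrix (Sum.elim (fun _ : Unit => 0) Fin.succ)
        (Sum.elim (fun _ : Unit => 0) Fin.succ) =
      fromBlocks (of fun _ _ => 2) (replicateRow Unit (-chainHead K n))
        (replicateCol Unit (-chainHead K n)) (pathCartan K n) := by
  ext (_ | i) (_ | j) <;> simp [pathCartan, chainHead, Fin.ext_iff, eq_comm, neg_ite]

theorem TCartan_map_eq_fromBlocks (p q r : ℕ) :
    (TCartan p q r).map (Int.cast : ℤ → K) =
      fromBlocks (of fun _ _ => 2)
        (replicateRow Unit (-Sum.elim (chainHead K (p - 1))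
          (Sum.elim (chainHead K (q - 1)) (chainHead K (r - 1)))))
        (replicateCol Unit (-Sum.elim (chainHead K (p - 1))
          (Sum.elim (chainHead K (q - 1)) (chainHead K (r - 1)))))
        (fromBlocks (pathCartan K (p - 1)) 0 0
          (fromBlocks (pathCartan K (q - 1)) 0 0 (pathCartan K (r - 1)))) := by
  ext (_ | i | i | i) (_ | j | j | j) <;>
    simp [TCartan, TAdj, pathCartan, chainHead, Fin.ext_iff, neg_ite]

end CommRing

section Field

variable [Field K] [CharZero K]

/-- The solution of `pathCartan K n *ᵥ x = chainHead K n`, read at index `k`: affine because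
`pathCartan` annihilates affine sequences away from the ends, and zero one step past the end. -/
def chainHarmonic (n k : ℕ) : K := ((n : K) - k) / (n + 1)

theorem pathCartan_mulVec_chainHarmonic (n : ℕ) :
    (pathCartan K n *ᵥ fun k => chainHarmonic K n k) = chainHead K n := by
  ext ⟨k, hk⟩
  have hn : (n : K) + 1 ≠ 0 := n.cast_add_one_ne_zero
  have hend : (if k + 1 < n then chainHarmonic K n (k + 1) else 0) =
      chainHarmonic K n (k + 1) := by
    split_ifs with h
    · rfl
    · simp [chainHarmonic, show k + 1 = n by omega]
  rw [pathCartan_mulVec, hend]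
  rcases k with _ | k <;> simp [chainHead, chainHarmonic] <;> field_simp <;> ring

theorem chainHead_dotProduct_chainHarmonic (n : ℕ) :
    (chainHead K n ⬝ᵥ fun k => chainHarmonic K n k) = n / (n + 1) := by
  rw [chainHead_dotProduct]
  split_ifs <;> simp_all [chainHarmonic]

theorem det_pathCartan (n : ℕ) : (pathCartan K n).det = n + 1 := by
  induction n with
  | zero => simp
  | succ n ih =>
    let e : Unit ⊕ Fin n ≃ Fin (n + 1) :=
      ((Equiv.optionEquivSumPUnit _).trans (Equiv.sumComm _ _)).symm.trans (finSuccEquiv n).symm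
    have he : ⇑e = Sum.elim (fun _ => 0) Fin.succ := by
      ext (_ | k) <;> simp [e]
    have hx : (pathCartan K n *ᵥ -fun k : Fin n => chainHarmonic K n k) = -chainHead K n := by
      rw [mulVec_neg, pathCartan_mulVec_chainHarmonic]
    rw [← det_submatrix_equiv_self e, he, pathCartan_succ_submatrix,
      det_fromBlocks_of_mulVec_eq _ _ _ _ _ hx, neg_dotProduct_neg,
      chainHead_dotProduct_chainHarmonic, ih]
    have hn : (n : K) + 1 ≠ 0 := n.cast_add_one_ne_zero
    field_simp
    push_cast
    ring

theorem det_TCartan_map (p q r : ℕ) (hp : 1 ≤ p) (hq : 1 ≤ q) (hr : 1 ≤ r) :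
    ((TCartan p q r).map (Int.cast : ℤ → K)).det =
      (p : K) * q + (q : K) * r + (r : K) * p - (p : K) * q * r := by
  set x : Fin (p - 1) ⊕ Fin (q - 1) ⊕ Fin (r - 1) → K :=
    Sum.elim (fun k => chainHarmonic K (p - 1) k)
      (Sum.elim (fun k => chainHarmonic K (q - 1) k) (fun k => chainHarmonic K (r - 1) k))
  have hx : fromBlocks (pathCartan K (p - 1)) 0 0
        (fromBlocks (pathCartan K (q - 1)) 0 0 (pathCartan K (r - 1))) *ᵥ -x =
      -Sum.elim (chainHead K (p - 1)) (Sum.elim (chainHead K (q - 1)) (chainHead K (r - 1))) := by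
    rw [mulVec_neg]
    simp [x, fromBlocks_mulVec, pathCartan_mulVec_chainHarmonic]
  rw [TCartan_map_eq_fromBlocks, det_fromBlocks_of_mulVec_eq _ _ _ _ _ hx, neg_dotProduct_neg,
    sumElim_dotProduct_sumElim, sumElim_dotProduct_sumElim,
    chainHead_dotProduct_chainHarmonic, chainHead_dotProduct_chainHarmonic,
    chainHead_dotProduct_chainHarmonic, det_fromBlocks_zero₂₁, det_fromBlocks_zero₂₁,
    det_pathCartan, det_pathCartan, det_pathCartan]
  simp only [Nat.cast_sub hp, Nat.cast_sub hq, Nat.cast_sub hr, Nat.cast_one, sub_add_cancel]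
  have hp' : (p : K) ≠ 0 := by exact_mod_cast (by omega : p ≠ 0)
  have hq' : (q : K) ≠ 0 := by exact_mod_cast (by omega : q ≠ 0)
  have hr' : (r : K) ≠ 0 := by exact_mod_cast (by omega : r ≠ 0)
  field_simp
  ring

end Field

/-- The determinant of the Cartan matrix of `T_{p,q,r}` equals
`p q + q r + r p - p q r = p q r (1/p + 1/q + 1/r - 1)`. -/
theorem TCartan_det (p q r : ℕ) (hp : 2 ≤ p) (hq : 2 ≤ q) (hr : 2 ≤ r) :
    (TCartan p q r).det =
      (p : ℤ) * q + (q : ℤ) * r + (r : ℤ) * p - (p : ℤ) * q * r := by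
  apply Int.cast_injective (α := ℚ)
  rw [Int.cast_det, det_TCartan_map ℚ p q r (by omega) (by omega) (by omega)]
  push_cast
  rfl
end
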